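/- arXiv:1402.1918 — 4 statements merged into one kernel-verified Lean document; each statement's English description precedes it below -/
import Mathlib

section
/- Let θ̂λ ∈ ℝ^d and θ* ∈ ℝ^d with θ* k-sparse, and let θ̂ be the k-truncation of θ̂λ (keeping its k largest entries in absolute value and zeroing the rest). Then ‖θ̂ − θ*‖₂² ≤ 5‖θ̂λ − θ*‖₂². -/
open Finset

/-- Truncating a vector to its `k` largest-magnitude entries loses at most a
factor of 5 in squared `ℓ₂` distance to any `k`-sparse vector. -/
theorem stmt_4 {d k : ℕ} (θstar θlam θhat : Fin d → ℝ)
    (hsparse : (Finset.univ.filter (fun i => θstar i ≠ 0)).card ≤ k)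
    (S : Finset (Fin d)) (hScard : S.card = k)
    (hStop : ∀ i ∈ S, ∀ j ∉ S, |θlam j| ≤ |θlam i|)
    (hθhat : ∀ i, θhat i = if i ∈ S then θlam i else 0) :
    ∑ i, (θhat i - θstar i) ^ 2 ≤ 5 * ∑ i, (θlam i - θstar i) ^ 2 := by
  classical
  set T := Finset.univ.filter (fun i => θstar i ≠ 0) with hT
  have hTmem : ∀ i, i ∉ T → θstar i = 0 := by
    intro i hi
    by_contra h
    exact hi (by simp [hT, h])
  set f := fun i => (θlam i - θstar i) ^ 2 with hf
  have hfnn : ∀ i ∈ (univ : Finset (Fin d)), 0 ≤ f i := fun i _ => sq_nonneg _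
  -- cardinality comparison
  have hcard : (T \ S).card ≤ (S \ T).card := by
    have h1 : (T \ S).card + (T ∩ S).card = T.card := Finset.card_sdiff_add_card_inter T S
    have h2 : (S \ T).card + (S ∩ T).card = S.card := Finset.card_sdiff_add_card_inter S T
    have h3 : (T ∩ S).card = (S ∩ T).card := by rw [Finset.inter_comm]
    have hT' : T.card ≤ S.card := by rw [hScard]; exact hsparse
    omega
  -- key inequality
  have key : ∑ i ∈ T \ S, (θlam i) ^ 2 ≤ ∑ j ∈ S \ T, f j := by
    rcases (T \ S).eq_empty_or_nonempty with h | h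
    · rw [h]
      simp only [Finset.sum_empty]
      exact Finset.sum_nonneg fun j _ => sq_nonneg _
    · have hB : (S \ T).Nonempty := by
        rw [← Finset.card_pos] at h ⊢
        omega
      obtain ⟨j0, hj0, hj0min⟩ := Finset.exists_min_image (S \ T) (fun j => (θlam j) ^ 2) hB
      have hj0S : j0 ∈ S := (Finset.mem_sdiff.mp hj0).1
      have step1 : ∑ i ∈ T \ S, (θlam i) ^ 2 ≤ (T \ S).card • (θlam j0) ^ 2 := by
        apply Finset.sum_le_card_nsmul
        intro i hi
        have hiS : i ∉ S := (Finset.mem_sdiff.mp hi).2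
        have := hStop j0 hj0S i hiS
        calc (θlam i) ^ 2 = |θlam i| ^ 2 := (sq_abs _).symm
          _ ≤ |θlam j0| ^ 2 := by
              exact pow_le_pow_left₀ (abs_nonneg _) this 2
          _ = (θlam j0) ^ 2 := sq_abs _
      have step2 : ((T \ S).card : ℝ) * (θlam j0) ^ 2 ≤ ((S \ T).card : ℝ) * (θlam j0) ^ 2 := by
        apply mul_le_mul_of_nonneg_right _ (sq_nonneg _)
        exact_mod_cast hcard
      have step3 : (S \ T).card • (θlam j0) ^ 2 ≤ ∑ j ∈ S \ T, (θlam j) ^ 2 :=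
        Finset.card_nsmul_le_sum _ _ _ hj0min
      have step4 : ∑ j ∈ S \ T, (θlam j) ^ 2 = ∑ j ∈ S \ T, f j := by
        apply Finset.sum_congr rfl
        intro j hj
        have : θstar j = 0 := hTmem j (Finset.mem_sdiff.mp hj).2
        simp [hf, this]
      rw [nsmul_eq_mul] at step1 step3
      linarith
  -- decompose the LHS
  have hsplitL : ∑ i, (θhat i - θstar i) ^ 2
      = ∑ i ∈ S, f i + ∑ i ∈ Sᶜ, (θstar i) ^ 2 := by
    rw [← Finset.sum_add_sum_compl S (fun i => (θhat i - θstar i) ^ 2)]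
    congr 1
    · apply Finset.sum_congr rfl
      intro i hi
      rw [hθhat i, if_pos hi]
    · apply Finset.sum_congr rfl
      intro i hi
      rw [hθhat i, if_neg (Finset.mem_compl.mp hi)]
      ring
  have hcomp : ∑ i ∈ Sᶜ, (θstar i) ^ 2 = ∑ i ∈ T \ S, (θstar i) ^ 2 := by
    apply (Finset.sum_subset ?_ ?_).symm
    · intro i hi
      exact Finset.mem_compl.mpr (Finset.mem_sdiff.mp hi).2
    · intro i hi hni
      have hiS : i ∉ S := Finset.mem_compl.mp hi
      have : i ∉ T := fun hT' => hni (Finset.mem_sdiff.mpr ⟨hT', hiS⟩)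
      rw [hTmem i this]
      ring
  have hTS : ∑ i ∈ T \ S, (θstar i) ^ 2
      ≤ 2 * ∑ i ∈ T \ S, f i + 2 * ∑ i ∈ T \ S, (θlam i) ^ 2 := by
    calc ∑ i ∈ T \ S, (θstar i) ^ 2
        ≤ ∑ i ∈ T \ S, (2 * f i + 2 * (θlam i) ^ 2) := by
          apply Finset.sum_le_sum
          intro i _
          simp only [hf]
          nlinarith [sq_nonneg (θlam i), sq_nonneg (θstar i - 2 * θlam i)]
      _ = 2 * ∑ i ∈ T \ S, f i + 2 * ∑ i ∈ T \ S, (θlam i) ^ 2 := by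
          rw [Finset.mul_sum, Finset.mul_sum, ← Finset.sum_add_distrib]
  have hsub1 : ∑ i ∈ T \ S, f i ≤ ∑ i ∈ Sᶜ, f i := by
    apply Finset.sum_le_sum_of_subset_of_nonneg
    · intro i hi; exact Finset.mem_compl.mpr (Finset.mem_sdiff.mp hi).2
    · intro i _ _; exact sq_nonneg _
  have hsub2 : ∑ j ∈ S \ T, f j ≤ ∑ j ∈ S, f j := by
    apply Finset.sum_le_sum_of_subset_of_nonneg (Finset.sdiff_subset)
    intro i _ _; exact sq_nonneg _
  have htotal : ∑ i ∈ S, f i + ∑ i ∈ Sᶜ, f i = ∑ i, f i :=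
    Finset.sum_add_sum_compl S f
  have hrhs : ∑ i, (θlam i - θstar i) ^ 2 = ∑ i, f i := rfl
  have hS0 : 0 ≤ ∑ i ∈ S, f i := Finset.sum_nonneg fun i _ => sq_nonneg _
  have hSc0 : 0 ≤ ∑ i ∈ Sᶜ, f i := Finset.sum_nonneg fun i _ => sq_nonneg _
  rw [hsplitL, hcomp, hrhs]
  linarith
end

section
/- For every a ≥ 0, Φ(a/2 − 1/a) ≤ a, where Φ is the cumulative distribution function of the standard normal distribution (with the convention Φ(−∞) = 0 when a = 0). -/
open ProbabilityTheory MeasureTheory Real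

/-- Chernoff bound for the standard Gaussian CDF: `Φ(x) ≤ exp(-x²/2)` for `x < 0`. -/
lemma gauss_cdf_le_exp (x : ℝ) (hx : x < 0) :
    ((gaussianReal 0 1) (Set.Iic x)).toReal ≤ Real.exp (-(x ^ 2) / 2) := by
  rw [gaussianReal_apply_eq_integral 0 one_ne_zero (Set.Iic x), ENNReal.toReal_ofReal
    (integral_nonneg fun s => gaussianPDFReal_nonneg _ _ _)]
  have h1 : ∫ s in Set.Iic x, gaussianPDFReal 0 1 s
      ≤ ∫ s in Set.Iic x, Real.exp (-(x ^ 2) / 2) * gaussianPDFReal x 1 s := by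
    apply setIntegral_mono_on
    · exact (integrable_gaussianPDFReal 0 1).restrict
    · exact ((integrable_gaussianPDFReal x 1).const_mul _).restrict
    · exact measurableSet_Iic
    · intro s hs
      simp only [Set.mem_Iic] at hs
      simp only [gaussianPDFReal, NNReal.coe_one, mul_one, sub_zero]
      rw [← mul_assoc, mul_comm (Real.exp _), mul_assoc, ← Real.exp_add]
      have hinv : (0:ℝ) ≤ (√(2 * π))⁻¹ := by positivity
      refine mul_le_mul_of_nonneg_left (Real.exp_le_exp.2 ?_) hinv
      have hmul : 0 ≤ (-x) * (x - s) := mul_nonneg (by linarith) (by linarith)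
      nlinarith [hmul]
  have h2 : ∫ s in Set.Iic x, Real.exp (-(x ^ 2) / 2) * gaussianPDFReal x 1 s
      = Real.exp (-(x ^ 2) / 2) * ∫ s in Set.Iic x, gaussianPDFReal x 1 s :=
    integral_const_mul _ _
  have h3 : ∫ s in Set.Iic x, gaussianPDFReal x 1 s ≤ ∫ s, gaussianPDFReal x 1 s :=
    setIntegral_le_integral (integrable_gaussianPDFReal x 1)
      (ae_of_all _ fun s => gaussianPDFReal_nonneg _ _ _)
  rw [integral_gaussianPDFReal_eq_one x one_ne_zero] at h3
  calc ∫ s in Set.Iic x, gaussianPDFReal 0 1 s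
      ≤ Real.exp (-(x ^ 2) / 2) * ∫ s in Set.Iic x, gaussianPDFReal x 1 s := by
        rw [← h2]; exact h1
    _ ≤ Real.exp (-(x ^ 2) / 2) * 1 := by
        exact mul_le_mul_of_nonneg_left h3 (Real.exp_nonneg _)
    _ = Real.exp (-(x ^ 2) / 2) := mul_one _

/-- `Φ(a/2 - 1/a) ≤ a` for all `a ≥ 0`, where `Φ` is the standard normal CDF
(with the convention `Φ(-∞) = 0` at `a = 0`). -/
theorem stmt_12 (Φ : ℝ → ℝ)
    (hΦ : ∀ x, Φ x = ((gaussianReal 0 1) (Set.Iic x)).toReal)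
    (a : ℝ) (ha : 0 ≤ a) :
    (if a = 0 then (0 : ℝ) else Φ (a / 2 - 1 / a)) ≤ a := by
  split_ifs with h
  · exact ha
  · have ha' : 0 < a := lt_of_le_of_ne ha (Ne.symm h)
    rcases le_or_gt 1 a with h1 | h1
    · rw [hΦ]
      refine le_trans ?_ h1
      exact ENNReal.toReal_le_of_le_ofReal one_pos.le (by simpa using prob_le_one)
    · have hx : a / 2 - 1 / a < 0 := by
        rw [sub_neg, div_lt_div_iff₀ two_pos ha']
        nlinarith
      rw [hΦ]
      refine (gauss_cdf_le_exp _ hx).trans ?_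
      have hlog : Real.log (1 / a) ≤ 1 / a - 1 :=
        Real.log_le_sub_one_of_pos (by positivity)
      rw [Real.log_div one_ne_zero h, Real.log_one, zero_sub] at hlog
      have haa : a * (1 / a) = 1 := mul_one_div_cancel h
      have hexp : -(a / 2 - 1 / a) ^ 2 / 2 ≤ Real.log a := by
        nlinarith [sq_nonneg (1 / a - 1), sq_nonneg a]
      exact (Real.exp_le_exp.2 hexp).trans_eq (Real.exp_log ha')
end

section
/- Let P = N(μ₁, σ²I_n) and Q = N(μ₂, σ²I_n) be Gaussian distributions with densities q₁ and q₂, and set a := ‖μ₁ − μ₂‖₂/σ. Then if Y ∼ Q, the event {q₁(Y)/q₂(Y) < e^{-1}} equals the event {Z ≤ a/2 − 1/a} for a standard normal Z, and hence P_{Y∼Q}[q₁(Y)/q₂(Y) < e^{-1}] = Φ(a/2 − 1/a) ≤ a. -/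
open ProbabilityTheory MeasureTheory Real
open Set
open scoped NNReal ENNReal RealInnerProductSpace

lemma aux_int : Integrable (fun x : ℝ => (-x) * Real.exp (-x^2/2)) := by
  apply (integrable_mul_exp_neg_mul_sq (b := 1/2) (by norm_num)).neg.congr
  filter_upwards with x
  show -(x * rexp (-(1/2) * x^2)) = -x * rexp (-x^2/2)
  rw [neg_mul]
  ring_nf

lemma aux_deriv (z : ℝ) :
    ∫ x in Set.Iic z, (-x) * Real.exp (-x^2/2) = Real.exp (-z^2/2) := by
  have h : ∀ x : ℝ, HasDerivAt (fun y => Real.exp (-y^2/2)) ((-x) * Real.exp (-x^2/2)) x := by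
    intro x
    have h1 : HasDerivAt (fun y : ℝ => -y^2/2) (-x) x := by
      have := ((hasDerivAt_pow 2 x).neg).div_const 2
      simpa using this.congr_deriv (by ring)
    simpa [mul_comm] using h1.exp
  have htend : Filter.Tendsto (fun y : ℝ => Real.exp (-y^2/2)) Filter.atBot (nhds 0) := by
    apply Real.tendsto_exp_atBot.comp
    have h1 : Filter.Tendsto (fun y : ℝ => y^2) Filter.atBot Filter.atTop := by
      have := (Filter.tendsto_pow_atTop (α := ℝ) (n := 2) (by norm_num)).comp (show Filter.Tendsto (Neg.neg : ℝ → ℝ) Filter.atBot Filter.atTop from Filter.tendsto_neg_atBot_atTop)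
      apply this.congr
      intro y
      simp [Function.comp]
    have := h1.atTop_div_const (by norm_num : (0:ℝ) < 2)
    apply ((show Filter.Tendsto (Neg.neg : ℝ → ℝ) Filter.atTop Filter.atBot from Filter.tendsto_neg_atTop_atBot).comp this).congr
    intro y
    simp [Function.comp, neg_div]
  have := MeasureTheory.integral_Iic_of_hasDerivAt_of_tendsto' (a := z)
    (fun x _ => h x) aux_int.integrableOn htend
  simpa using this

lemma gauss_tail {z : ℝ} (hz : z < 0) :
    ((gaussianReal 0 1) (Set.Iic z)).toReal ≤ (Real.sqrt (2*π))⁻¹ * (-z)⁻¹ := by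
  rw [gaussianReal_apply_eq_integral 0 one_ne_zero,
    ENNReal.toReal_ofReal (setIntegral_nonneg measurableSet_Iic fun x _ => gaussianPDFReal_nonneg 0 1 x)]
  have hzpos : 0 < -z := by linarith
  have hb : ∀ x ∈ Set.Iic z, gaussianPDFReal 0 1 x
      ≤ (Real.sqrt (2*π))⁻¹ * ((-z)⁻¹ * ((-x) * Real.exp (-x^2/2))) := by
    intro x hx
    have hx' : x ≤ z := hx
    have h1 : (1:ℝ) ≤ (-z)⁻¹ * (-x) := by
      rw [← div_eq_inv_mul, le_div_iff₀ hzpos]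
      linarith
    have hpdf : gaussianPDFReal 0 1 x = (Real.sqrt (2*π))⁻¹ * Real.exp (-x^2/2) := by
      simp [gaussianPDFReal]
    rw [hpdf]
    have := mul_le_mul_of_nonneg_right h1 (Real.exp_nonneg (-x^2/2))
    calc (Real.sqrt (2*π))⁻¹ * Real.exp (-x^2/2)
        ≤ (Real.sqrt (2*π))⁻¹ * ((-z)⁻¹ * (-x) * Real.exp (-x^2/2)) := by
          apply mul_le_mul_of_nonneg_left _ (by positivity)
          simpa using this
      _ = (Real.sqrt (2*π))⁻¹ * ((-z)⁻¹ * ((-x) * Real.exp (-x^2/2))) := by ring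
  have hint2 : IntegrableOn (fun x : ℝ => (Real.sqrt (2*π))⁻¹ * ((-z)⁻¹ * ((-x) * Real.exp (-x^2/2)))) (Set.Iic z) := by
    exact ((aux_int.const_mul _).const_mul _).integrableOn
  calc ∫ x in Set.Iic z, gaussianPDFReal 0 1 x
      ≤ ∫ x in Set.Iic z, (Real.sqrt (2*π))⁻¹ * ((-z)⁻¹ * ((-x) * Real.exp (-x^2/2))) :=
        setIntegral_mono_on (integrable_gaussianPDFReal 0 1).integrableOn hint2 measurableSet_Iic hb
    _ = (Real.sqrt (2*π))⁻¹ * ((-z)⁻¹ * Real.exp (-z^2/2)) := by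
        rw [integral_const_mul, integral_const_mul, aux_deriv]
    _ ≤ (Real.sqrt (2*π))⁻¹ * ((-z)⁻¹ * 1) := by
        apply mul_le_mul_of_nonneg_left _ (by positivity)
        apply mul_le_mul_of_nonneg_left _ (by positivity)
        exact Real.exp_le_one_iff.mpr (by nlinarith [sq_nonneg z])
    _ = (Real.sqrt (2*π))⁻¹ * (-z)⁻¹ := by ring

lemma key_measure {n : ℕ} [NeZero n] (b : OrthonormalBasis (Fin n) ℝ (EuclideanSpace ℝ (Fin n)))
    (μ₂ : EuclideanSpace ℝ (Fin n)) (σ : ℝ) (hσ : 0 < σ) (t : ℝ) :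
    (volume.withDensity fun y => ENNReal.ofReal ((Real.sqrt (2 * π * σ ^ 2)) ^ (-(n : ℤ)) *
        Real.exp (-‖y - μ₂‖ ^ 2 / (2 * σ ^ 2)))) {y | b.repr y 0 < t}
      = gaussianReal (b.repr μ₂ 0) ⟨σ ^ 2, sq_nonneg σ⟩ (Set.Iio t) := by
  set V : ℝ≥0 := ⟨σ ^ 2, sq_nonneg σ⟩ with hV_def
  have hVc : (V : ℝ) = σ ^ 2 := rfl
  have hV : V ≠ 0 := by
    intro h
    rw [h] at hVc
    simp at hVc
    nlinarith
  set m : EuclideanSpace ℝ (Fin n) := b.repr μ₂ with hm_def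
  set f : Fin n → ℝ → ℝ := fun i x => gaussianPDFReal (m i) V x with hf_def
  set dens : EuclideanSpace ℝ (Fin n) → ℝ := fun y => (Real.sqrt (2 * π * σ ^ 2)) ^ (-(n : ℤ)) *
        Real.exp (-‖y - μ₂‖ ^ 2 / (2 * σ ^ 2)) with hdens_def
  set e := (MeasurableEquiv.toLp 2 (Fin n → ℝ)).symm with he_def
  set ee := b.measurableEquiv.trans e with hee_def
  have hpres : MeasurePreserving ee volume volume :=
    (EuclideanSpace.volume_preserving_symm_measurableEquiv_toLp _).comp b.measurePreserving_measurableEquiv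
  have hψ : ∀ (x : Fin n → ℝ) (i : Fin n), b.repr (ee.symm x) i = x i := by
    intro x i
    show b.repr (b.measurableEquiv.symm (e.symm x)) i = x i
    have h1 : b.measurableEquiv.symm (e.symm x) = b.repr.symm (e.symm x) := rfl
    rw [h1, LinearIsometryEquiv.apply_symm_apply]
    show ((MeasurableEquiv.toLp 2 (Fin n → ℝ)) x) i = x i
    rfl
  have hsqrtpos : (0:ℝ) < Real.sqrt (2 * π * σ ^ 2) := Real.sqrt_pos.mpr (by positivity)
  have hq : ∀ x : Fin n → ℝ, dens (ee.symm x) = ∏ i, f i (x i) := by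
    intro x
    have hnorm : ‖ee.symm x - μ₂‖ ^ 2 = ∑ i, (x i - m i) ^ 2 := by
      have h1 : ‖ee.symm x - μ₂‖ = ‖b.repr (ee.symm x) - m‖ := by
        rw [hm_def, ← b.repr.map_sub, b.repr.norm_map]
      rw [h1, EuclideanSpace.norm_eq, Real.sq_sqrt (by positivity)]
      congr 1
      ext i
      simp [hψ]
    rw [hdens_def]
    simp only
    rw [hnorm]
    have hc : (Real.sqrt (2 * π * σ ^ 2)) ^ (-(n : ℤ)) = ∏ _i : Fin n, (Real.sqrt (2 * π * σ ^ 2))⁻¹ := by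
      rw [Finset.prod_const, zpow_neg, zpow_natCast, inv_pow]
      simp
    have hexp : Real.exp (-(∑ i, (x i - m i) ^ 2) / (2 * σ ^ 2))
        = ∏ i, Real.exp (-(x i - m i) ^ 2 / (2 * σ ^ 2)) := by
      rw [← Real.exp_sum]
      congr 1
      rw [← Finset.sum_neg_distrib, ← Finset.sum_div]
    rw [hc, hexp, ← Finset.prod_mul_distrib]
    refine Finset.prod_congr rfl fun i _ => ?_
    simp only [hf_def, gaussianPDFReal, hVc]
  have hS : MeasurableSet {y : EuclideanSpace ℝ (Fin n) | b.repr y 0 < t} := by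
    have : Continuous fun y : EuclideanSpace ℝ (Fin n) => b.repr y 0 :=
      (continuous_apply 0).comp ((PiLp.continuous_ofLp 2 _).comp b.repr.continuous)
    exact measurableSet_lt this.measurable measurable_const
  have hIntPi : Integrable (fun x : Fin n → ℝ => ∏ i, f i (x i)) :=
    Integrable.fin_nat_prod (fun i => integrable_gaussianPDFReal (m i) V)
  have hInt : Integrable dens := by
    rw [← (hpres.symm ee).integrable_comp_emb ee.symm.measurableEmbedding]
    apply hIntPi.congr
    filter_upwards with x
    exact (hq x).symm
  have hpre : ee.symm ⁻¹' {y : EuclideanSpace ℝ (Fin n) | b.repr y 0 < t}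
      = {x : (Fin n) → ℝ | x 0 < t} := by
    ext x
    simp [hψ]
  rw [withDensity_apply _ hS]
  rw [← ofReal_integral_eq_lintegral_ofReal hInt.integrableOn
    (Filter.Eventually.of_forall fun y => by positivity)]
  rw [← (hpres.symm ee).setIntegral_preimage_emb ee.symm.measurableEmbedding dens _]
  rw [hpre]
  have hmeas' : MeasurableSet {x : Fin n → ℝ | x 0 < t} :=
    measurableSet_lt (measurable_pi_apply 0) measurable_const
  have hcong : ∫ x in {x : Fin n → ℝ | x 0 < t}, dens (ee.symm x)
      = ∫ x in {x : Fin n → ℝ | x 0 < t}, ∏ i, f i (x i) := by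
    apply setIntegral_congr_fun hmeas'
    intro x _
    exact hq x
  rw [hcong]
  set F : Fin n → ℝ → ℝ := fun i => if i = 0 then Set.indicator (Set.Iio t) (f 0) else f i with hF_def
  have hFprod : ∀ x : Fin n → ℝ, Set.indicator {x : Fin n → ℝ | x 0 < t} (fun x => ∏ i, f i (x i)) x
      = ∏ i, F i (x i) := by
    intro x
    by_cases hx : x 0 < t
    · rw [Set.indicator_of_mem (show x ∈ {x : Fin n → ℝ | x 0 < t} from hx)]
      apply Finset.prod_congr rfl
      intro i _
      rw [hF_def]
      by_cases hi : i = 0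
      · subst hi
        simp only [if_pos rfl]
        exact (Set.indicator_of_mem (show x 0 ∈ Set.Iio t from hx) (f 0)).symm
      · simp [hi]
    · rw [Set.indicator_of_notMem (show x ∉ {x : Fin n → ℝ | x 0 < t} from hx)]
      symm
      apply Finset.prod_eq_zero (Finset.mem_univ 0)
      rw [hF_def]
      simp only [if_pos rfl]
      exact Set.indicator_of_notMem (show x 0 ∉ Set.Iio t from hx) (f 0)
  rw [← integral_indicator hmeas']
  rw [integral_congr_ae (Filter.Eventually.of_forall hFprod)]
  rw [MeasureTheory.volume_pi, MeasureTheory.integral_fin_nat_prod_eq_prod (μ := fun _ => volume) F]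
  have hFi : ∀ i, ∫ x, F i x = if i = 0 then ∫ x in Set.Iio t, f 0 x else 1 := by
    intro i
    by_cases hi : i = 0
    · subst hi
      have hF0 : F 0 = (Set.Iio t).indicator (f 0) := by simp [hF_def]
      rw [hF0, if_pos rfl, integral_indicator measurableSet_Iio]
    · have hFi' : F i = f i := by simp [hF_def, hi]
      rw [hFi', if_neg hi]
      exact integral_gaussianPDFReal_eq_one (m i) hV
  rw [Finset.prod_congr rfl fun i _ => hFi i, Finset.prod_ite_eq']
  simp only [Finset.mem_univ, if_pos]
  rw [gaussianReal_apply_eq_integral _ hV]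

set_option maxHeartbeats 2000000 in
/-- For Gaussian densities `q₁, q₂` with means `μ₁, μ₂` and covariance `σ²I`,
the probability under `Q = N(μ₂, σ²I)` that the likelihood ratio `q₁/q₂` falls
below `e⁻¹` equals `Φ(a/2 - 1/a)` with `a = ‖μ₁ - μ₂‖/σ`, which is at most `a`. -/
theorem stmt_13 {n : ℕ} (μ₁ μ₂ : EuclideanSpace ℝ (Fin n)) (σ : ℝ) (hσ : 0 < σ)
    (hμ : μ₁ ≠ μ₂)
    (q₁ q₂ : EuclideanSpace ℝ (Fin n) → ℝ)
    (hq₁ : ∀ y, q₁ y = (Real.sqrt (2 * π * σ ^ 2)) ^ (-(n : ℤ)) *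
        Real.exp (-‖y - μ₁‖ ^ 2 / (2 * σ ^ 2)))
    (hq₂ : ∀ y, q₂ y = (Real.sqrt (2 * π * σ ^ 2)) ^ (-(n : ℤ)) *
        Real.exp (-‖y - μ₂‖ ^ 2 / (2 * σ ^ 2)))
    (Q : Measure (EuclideanSpace ℝ (Fin n)))
    (hQ : Q = volume.withDensity (fun y => ENNReal.ofReal (q₂ y)))
    (a : ℝ) (ha : a = ‖μ₁ - μ₂‖ / σ)
    (Φ : ℝ → ℝ) (hΦ : ∀ x, Φ x = ((gaussianReal 0 1) (Set.Iic x)).toReal) :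
    (Q {y | q₁ y / q₂ y < Real.exp (-1)}).toReal = Φ (a / 2 - 1 / a) ∧
      (Q {y | q₁ y / q₂ y < Real.exp (-1)}).toReal ≤ a := by
  have hd : (0:ℝ) < ‖μ₁ - μ₂‖ := norm_pos_iff.mpr (sub_ne_zero.mpr hμ)
  haveI hn : NeZero n := by
    constructor
    rintro rfl
    exact hμ (by ext i; exact i.elim0)
  set d : ℝ := ‖μ₁ - μ₂‖ with hd_def
  have ha' : 0 < a := ha ▸ div_pos hd hσ
  set u : EuclideanSpace ℝ (Fin n) := d⁻¹ • (μ₁ - μ₂) with hu_def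
  have hu : ‖u‖ = 1 := by
    rw [hu_def, norm_smul, Real.norm_eq_abs, abs_inv, abs_of_pos hd]
    exact inv_mul_cancel₀ hd.ne'
  have horth : Orthonormal ℝ (Set.restrict {(0 : Fin n)} (fun _ => u)) := by
    constructor
    · intro i
      exact hu
    · intro i j hij
      exact absurd (Subsingleton.elim i j) hij
  obtain ⟨b, hb⟩ := horth.exists_orthonormalBasis_extension_of_card_eq
    (by simp [finrank_euclideanSpace])
  have hb0 : b 0 = u := hb 0 rfl
  set z : ℝ := a / 2 - 1 / a with hz_def
  set V : ℝ≥0 := ⟨σ ^ 2, sq_nonneg σ⟩ with hV_def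
  have hVc : (V : ℝ) = σ ^ 2 := rfl
  have hV : V ≠ 0 := by
    intro h
    rw [h] at hVc
    simp at hVc
    nlinarith
  set m0 : ℝ := b.repr μ₂ 0 with hm0_def
  set t : ℝ := m0 + σ * z with ht_def
  have hm0 : m0 = d⁻¹ * ⟪μ₁ - μ₂, μ₂⟫ := by
    rw [hm0_def, OrthonormalBasis.repr_apply_apply, hb0, hu_def]
    exact real_inner_smul_left _ _ _
  set ip : ℝ := ⟪μ₁, μ₂⟫ with hip_def
  have hI : ⟪μ₁ - μ₂, μ₂⟫ = ip - ‖μ₂‖ ^ 2 := by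
    rw [inner_sub_left, real_inner_self_eq_norm_sq, ← hip_def]
  have hdd : d ^ 2 = ‖μ₁‖ ^ 2 - 2 * ip + ‖μ₂‖ ^ 2 := by
    rw [hd_def, hip_def]
    exact norm_sub_sq_real μ₁ μ₂
  have hdt : 2 * d * t = ‖μ₁‖ ^ 2 - ‖μ₂‖ ^ 2 - 2 * σ ^ 2 := by
    have hσz : σ * z = d / 2 - σ ^ 2 / d := by
      rw [hz_def, ha]
      field_simp
    rw [ht_def, hm0, hI, hσz]
    field_simp
    nlinarith [hdd]
  have hset : {y | q₁ y / q₂ y < Real.exp (-1)}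
      = {y : EuclideanSpace ℝ (Fin n) | b.repr y 0 < t} := by
    ext y
    simp only [Set.mem_setOf_eq]
    rw [hq₁, hq₂, OrthonormalBasis.repr_apply_apply, hb0, hu_def]
    rw [real_inner_smul_left]
    have hsqrtpos : (0:ℝ) < Real.sqrt (2 * π * σ ^ 2) := Real.sqrt_pos.mpr (by positivity)
    have hcpos : (0:ℝ) < (Real.sqrt (2 * π * σ ^ 2)) ^ (-(n : ℤ)) := zpow_pos hsqrtpos _
    rw [mul_div_mul_left _ _ hcpos.ne', ← Real.exp_sub, Real.exp_lt_exp]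
    have hexpand : ‖y - μ₂‖ ^ 2 - ‖y - μ₁‖ ^ 2
        = 2 * ⟪μ₁ - μ₂, y⟫ + ‖μ₂‖ ^ 2 - ‖μ₁‖ ^ 2 := by
      have h1 := norm_sub_sq_real y μ₂
      have h2 := norm_sub_sq_real y μ₁
      have h3 : ⟪μ₁ - μ₂, y⟫ = ⟪y, μ₁⟫ - ⟪y, μ₂⟫ := by
        rw [inner_sub_left, real_inner_comm μ₁ y, real_inner_comm μ₂ y]
      linarith
    rw [div_sub_div_same, div_lt_iff₀ (by positivity : (0:ℝ) < 2 * σ ^ 2)]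
    rw [inv_mul_lt_iff₀ hd]
    constructor
    · intro h
      linarith [hexpand, hdt]
    · intro h
      linarith [hexpand, hdt]
  have hQS : Q {y | q₁ y / q₂ y < Real.exp (-1)} = gaussianReal m0 V (Set.Iio t) := by
    rw [hQ, hset]
    have hdens_eq : (fun y => ENNReal.ofReal (q₂ y))
        = fun y : EuclideanSpace ℝ (Fin n) => ENNReal.ofReal ((Real.sqrt (2 * π * σ ^ 2)) ^ (-(n : ℤ)) *
            Real.exp (-‖y - μ₂‖ ^ 2 / (2 * σ ^ 2))) := funext fun y => by rw [hq₂]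
    rw [hdens_eq]
    exact key_measure b μ₂ σ hσ t
  have hmap : gaussianReal m0 V (Set.Iio t) = gaussianReal 0 1 (Set.Iic z) := by
    have h1 : (gaussianReal 0 1).map (σ * ·) = gaussianReal 0 V := by
      rw [gaussianReal_map_const_mul σ]
      congr 1
      · ring
      · ext
        simp [hVc]
    have h2 : (gaussianReal 0 V).map (· + m0) = gaussianReal m0 V := by
      rw [gaussianReal_map_add_const m0, zero_add]
    have h3 : (gaussianReal 0 1).map (fun x => σ * x + m0) = gaussianReal m0 V := by
      rw [← h2, ← h1, Measure.map_map (measurable_id'.add_const m0)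
        (measurable_id'.const_mul σ)]
      rfl
    rw [← h3, Measure.map_apply ((measurable_id'.const_mul σ).add_const m0) measurableSet_Iio]
    have hpre : (fun x => σ * x + m0) ⁻¹' Set.Iio t = Set.Iio z := by
      ext x
      simp only [Set.mem_preimage, Set.mem_Iio, ht_def]
      constructor
      · intro h
        have h' : σ * x < σ * z := by linarith
        exact (mul_lt_mul_iff_right₀ hσ).mp h'
      · intro h
        have h' : σ * x < σ * z := (mul_lt_mul_iff_right₀ hσ).mpr h
        linarith
    rw [hpre]
    have hsing : gaussianReal 0 1 {z} = 0 := by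
      rw [gaussianReal_apply_eq_integral _ one_ne_zero]
      have hr : (volume : Measure ℝ).restrict {z} = 0 := by
        rw [Measure.restrict_eq_zero]
        exact volume_singleton
      rw [hr, integral_zero_measure, ENNReal.ofReal_zero]
    have hfin : (gaussianReal 0 1) (Set.Iic z) = (gaussianReal 0 1) (Set.Iio z) := by
      apply le_antisymm
      · calc (gaussianReal 0 1) (Set.Iic z) = (gaussianReal 0 1) (Set.Iio z ∪ {z}) := by
              rw [Set.Iio_union_right]
          _ ≤ (gaussianReal 0 1) (Set.Iio z) + (gaussianReal 0 1) {z} := measure_union_le _ _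
          _ = (gaussianReal 0 1) (Set.Iio z) := by rw [hsing, add_zero]
      · exact measure_mono Set.Iio_subset_Iic_self
    rw [hfin]
  have heq : (Q {y | q₁ y / q₂ y < Real.exp (-1)}).toReal = Φ z := by
    rw [hQS, hmap, hΦ]
  refine ⟨heq, ?_⟩
  rw [heq, hΦ]
  rcases le_or_gt 1 a with h1 | h1
  · have hle : ((gaussianReal 0 1) (Set.Iic z)).toReal ≤ 1 := by
      have := prob_le_one (μ := gaussianReal 0 1) (s := Set.Iic z)
      simpa using ENNReal.toReal_mono ENNReal.one_ne_top this
    linarith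
  · have hzneg : z < 0 := by
      rw [hz_def, sub_neg, div_lt_div_iff₀ (by norm_num) ha']
      nlinarith
    have hzval : -z = 1 / a - a / 2 := by rw [hz_def]; ring
    have hzpos : (0:ℝ) < -z := by linarith
    have hkey : 1 / (2 * a) ≤ -z := by
      rw [hzval, div_le_iff₀ (by positivity : (0:ℝ) < 2 * a)]
      have hid : (1 / a - a / 2) * (2 * a) = 2 - a * a := by
        have ha0 : a ≠ 0 := ne_of_gt ha'
        field_simp
      rw [hid]
      nlinarith
    have h2 : (-z)⁻¹ ≤ 2 * a := by
      have := inv_anti₀ (by positivity : (0:ℝ) < 1 / (2 * a)) hkey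
      calc (-z)⁻¹ ≤ (1 / (2 * a))⁻¹ := this
        _ = 2 * a := by field_simp
    have hsq : (2:ℝ) ≤ Real.sqrt (2 * π) := by
      rw [Real.le_sqrt (by norm_num) (by positivity)]
      nlinarith [Real.pi_gt_three]
    have hsqinv : (Real.sqrt (2 * π))⁻¹ ≤ 2⁻¹ :=
      inv_anti₀ (by norm_num) hsq
    calc ((gaussianReal 0 1) (Set.Iic z)).toReal
        ≤ (Real.sqrt (2 * π))⁻¹ * (-z)⁻¹ := gauss_tail hzneg
      _ ≤ 2⁻¹ * (2 * a) := by
          apply mul_le_mul hsqinv h2 (by positivity) (by norm_num)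
      _ = a := by ring
end

section
/- Let A be an n×d real matrix and let C₀ := [B; 0] be an n×d matrix whose rank r satisfies r < N, where N is the number of nonzero columns of C₀, and suppose N > 3k. Then there exists a nonzero (3k+1)-sparse vector θ with C₀θ = 0; moreover, letting S be the set of indices of the k largest-magnitude entries of θ, θ lies in the cone {θ : ‖θ_{S^c}‖₁ ≤ 3‖θ_S‖₁}, so the restricted eigenvalue constant of C₀ is zero. -/
open Finset

lemma topk_aux {ι : Type*} [DecidableEq ι] (f : ι → ℝ) :
    ∀ (k : ℕ) (s : Finset ι), k ≤ s.card →
    ∃ S, S ⊆ s ∧ S.card = k ∧ ∀ i ∈ S, ∀ j ∈ s, j ∉ S → f j ≤ f i := by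
  intro k
  induction k with
  | zero => intro s _; exact ⟨∅, by simp, by simp, by simp⟩
  | succ k ih =>
    intro s hs
    have hne : s.Nonempty := Finset.card_pos.mp (by omega)
    obtain ⟨b, hb, hmax⟩ := Finset.exists_max_image s f hne
    have hk' : k ≤ (s.erase b).card := by
      rw [Finset.card_erase_of_mem hb]; omega
    obtain ⟨S, hSsub, hScard, hprop⟩ := ih (s.erase b) hk'
    have hbS : b ∉ S := fun h => (Finset.mem_erase.mp (hSsub h)).1 rfl
    refine ⟨insert b S, ?_, ?_, ?_⟩
    · intro x hx
      rcases Finset.mem_insert.mp hx with rfl | hx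
      · exact hb
      · exact Finset.mem_of_mem_erase (hSsub hx)
    · rw [Finset.card_insert_of_notMem hbS, hScard]
    · intro i hi j hj hjS
      rcases Finset.mem_insert.mp hi with rfl | hi
      · exact hmax j hj
      · have hjb : j ≠ b := fun h => hjS (h ▸ Finset.mem_insert_self b S)
        exact hprop i hi j (Finset.mem_erase.mpr ⟨hjb, hj⟩)
          (fun h => hjS (Finset.mem_insert_of_mem h))

/-- If `rank C ≤ 3k` but `C` has more than `3k` nonzero columns, then there is
a nonzero `(3k+1)`-sparse kernel vector lying in a restricted-eigenvalue cone
`C(S)` with `|S| = k`; consequently the RE constant of `C` is zero. -/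
theorem stmt_16 {n d k : ℕ} (hk : 1 ≤ k) (C : Matrix (Fin n) (Fin d) ℝ)
    (hrank : C.rank ≤ 3 * k)
    (hcols : 3 * k < (Finset.univ.filter (fun j : Fin d => (fun i => C i j) ≠ 0)).card) :
    ∃ θ : Fin d → ℝ, θ ≠ 0 ∧
      (Finset.univ.filter (fun j => θ j ≠ 0)).card ≤ 3 * k + 1 ∧
      C.mulVec θ = 0 ∧
      (∃ S : Finset (Fin d), S.card = k ∧
        (∀ i ∈ S, ∀ j ∉ S, |θ j| ≤ |θ i|) ∧
        ∑ j ∈ Sᶜ, |θ j| ≤ 3 * ∑ j ∈ S, |θ j|) ∧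
      (∀ γ : ℝ,
        (∀ S : Finset (Fin d), S.card = k → ∀ θ' : Fin d → ℝ,
          (∑ j ∈ Sᶜ, |θ' j|) ≤ 3 * ∑ j ∈ S, |θ' j| →
          γ * ∑ j, (θ' j) ^ 2 ≤ (1 / (n : ℝ)) * ∑ i, (C.mulVec θ' i) ^ 2) →
        γ ≤ 0) := by
  -- pick a set T of 3k+1 columns
  obtain ⟨T, -, hTcard⟩ := Finset.exists_subset_card_eq (show 3 * k + 1 ≤ _ from hcols)
  classical
  -- extension-by-zero linear map
  let incl : (↥T → ℝ) →ₗ[ℝ] (Fin d → ℝ) :=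
    { toFun := fun x j => if h : j ∈ T then x ⟨j, h⟩ else 0
      map_add' := by intro x y; funext j; by_cases h : j ∈ T <;> simp [h]
      map_smul' := by intro c x; funext j; by_cases h : j ∈ T <;> simp [h] }
  let L := C.mulVecLin.comp incl
  have hker : LinearMap.ker L ≠ ⊥ := by
    intro hbot
    have hinj : Function.Injective L := LinearMap.ker_eq_bot.mp hbot
    have h1 : Module.finrank ℝ (LinearMap.range L) = 3 * k + 1 := by
      rw [LinearMap.finrank_range_of_inj hinj, Module.finrank_fintype_fun_eq_card,
        Fintype.card_coe, hTcard]
    have h2 : Module.finrank ℝ (LinearMap.range L)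
        ≤ Module.finrank ℝ (LinearMap.range C.mulVecLin) :=
      Submodule.finrank_mono (LinearMap.range_comp_le_range incl C.mulVecLin)
    rw [Matrix.rank] at hrank
    omega
  obtain ⟨x, hxker, hxne⟩ := Submodule.ne_bot_iff _ |>.mp hker
  set θ : Fin d → ℝ := incl x with hθdef
  have hθT : ∀ j, j ∉ T → θ j = 0 := by
    intro j hj; simp only [hθdef, incl, LinearMap.coe_mk, AddHom.coe_mk]; exact dif_neg hj
  have hθne : θ ≠ 0 := by
    intro h
    apply hxne
    funext i
    have : θ i = 0 := congrFun h i
    simpa only [hθdef, incl, LinearMap.coe_mk, AddHom.coe_mk, dif_pos i.2, Pi.zero_apply, Subtype.coe_eta] using this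
  have hCθ : C.mulVec θ = 0 := hxker
  have hsupp : (Finset.univ.filter (fun j => θ j ≠ 0)) ⊆ T := by
    intro j hj
    by_contra hjT
    exact (Finset.mem_filter.mp hj).2 (hθT j hjT)
  have hsuppcard : (Finset.univ.filter (fun j => θ j ≠ 0)).card ≤ 3 * k + 1 := by
    rw [← hTcard]; exact Finset.card_le_card hsupp
  -- top-k set
  have hkd : k ≤ (Finset.univ : Finset (Fin d)).card := by
    have h1 := Finset.card_le_univ T
    rw [hTcard] at h1
    simp only [Finset.card_univ, Fintype.card_fin] at h1 ⊢
    omega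
  obtain ⟨S, -, hScard, hSprop'⟩ := topk_aux (fun j => |θ j|) k Finset.univ hkd
  have hSprop : ∀ i ∈ S, ∀ j ∉ S, |θ j| ≤ |θ i| := fun i hi j hj =>
    hSprop' i hi j (Finset.mem_univ j) hj
  -- cone inequality
  have hcone : ∑ j ∈ Sᶜ, |θ j| ≤ 3 * ∑ j ∈ S, |θ j| := by
    have hRHS : (0:ℝ) ≤ ∑ j ∈ S, |θ j| := Finset.sum_nonneg fun j _ => abs_nonneg _
    by_cases hz : ∀ j ∉ S, θ j = 0
    · have : ∑ j ∈ Sᶜ, |θ j| = 0 :=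
        Finset.sum_eq_zero fun j hj => by rw [hz j (Finset.mem_compl.mp hj), abs_zero]
      linarith
    · push_neg at hz
      obtain ⟨j₀, hj₀S, hj₀⟩ := hz
      have hSsupp : S ⊆ Finset.univ.filter (fun j => θ j ≠ 0) := by
        intro i hi
        refine Finset.mem_filter.mpr ⟨Finset.mem_univ i, fun h => hj₀ ?_⟩
        have := hSprop i hi j₀ hj₀S
        rw [h, abs_zero] at this
        exact abs_eq_zero.mp (le_antisymm this (abs_nonneg _))
      set F := Sᶜ.filter (fun j => θ j ≠ 0) with hF
      have hLHS : ∑ j ∈ Sᶜ, |θ j| = ∑ j ∈ F, |θ j| := by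
        refine (Finset.sum_subset (Finset.filter_subset _ _) fun j hj hnj => ?_).symm
        rw [Finset.mem_filter, not_and] at hnj
        rw [not_not.mp (hnj hj), abs_zero]
      have hFcard : F.card ≤ 2 * k + 1 := by
        have hFsub : F ⊆ (Finset.univ.filter (fun j => θ j ≠ 0)) \ S := by
          intro j hj
          rw [Finset.mem_filter] at hj
          exact Finset.mem_sdiff.mpr ⟨Finset.mem_filter.mpr ⟨Finset.mem_univ j, hj.2⟩,
            Finset.mem_compl.mp hj.1⟩
        have := Finset.card_le_card hFsub
        rw [Finset.card_sdiff_of_subset hSsupp, hScard] at this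
        omega
      have key : ∀ i ∈ S, ∑ j ∈ F, |θ j| ≤ (2 * k + 1 : ℝ) * |θ i| := by
        intro i hi
        calc ∑ j ∈ F, |θ j| ≤ F.card • |θ i| := by
              refine Finset.sum_le_card_nsmul F _ _ fun j hj => ?_
              exact hSprop i hi j (Finset.mem_compl.mp (Finset.mem_filter.mp hj).1)
          _ = (F.card : ℝ) * |θ i| := by rw [nsmul_eq_mul]
          _ ≤ (2 * k + 1 : ℝ) * |θ i| := by
              apply mul_le_mul_of_nonneg_right _ (abs_nonneg _)
              exact_mod_cast hFcard
      have hsum : (k : ℝ) * ∑ j ∈ F, |θ j| ≤ (2 * k + 1) * ∑ j ∈ S, |θ j| := by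
        have := Finset.sum_le_sum key
        rw [Finset.sum_const, hScard, nsmul_eq_mul, ← Finset.mul_sum] at this
        exact this
      have hk1 : (1:ℝ) ≤ (k:ℝ) := by exact_mod_cast hk
      rw [hLHS]
      nlinarith [Finset.sum_nonneg (fun j (_ : j ∈ F) => abs_nonneg (θ j))]
  refine ⟨θ, hθne, hsuppcard, hCθ, ⟨S, hScard, hSprop, hcone⟩, ?_⟩
  intro γ hγ
  have h := hγ S hScard θ hcone
  rw [hCθ] at h
  simp only [Pi.zero_apply, ne_eq, OfNat.ofNat_ne_zero, not_false_eq_true, zero_pow,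
    Finset.sum_const_zero, mul_zero] at h
  have hpos : 0 < ∑ j, (θ j) ^ 2 := by
    obtain ⟨j, hj⟩ : ∃ j, θ j ≠ 0 := by
      by_contra hc
      push_neg at hc
      exact hθne (funext hc)
    have : 0 < (θ j)^2 := by positivity
    exact lt_of_lt_of_le this (Finset.single_le_sum (fun i _ => sq_nonneg (θ i))
      (Finset.mem_univ j))
  nlinarith
end
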